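/- Let d and k be positive integers with 2 ≤ d ≤ k, and let t₁ ≤ t₂ ≤ ⋯ ≤ t_d be integers with t₁ ≥ 2 and t₂ ≥ k−d+2. Then there exists n₀ such that for all n ≥ n₀ the following holds: for any pairwise disjoint subsets T₁, ..., T_d of [n] with |T_i| = t_i for all i, the family H = {F ⊆ [n] : |F| = k and F ∩ T_i ≠ ∅ for all i = 1, ..., d} has the property that every intersecting subfamily G ⊆ H satisfies |G| ≤ max_{x ∈ [n]} |{H ∈ H : x ∈ H}|. -/

import Mathlib

/-!
Group the members of `G` by their trace `A ∩ U` on `U = ⋃ Tᵢ`. A trace which is a transversal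
(one point in each `Tᵢ`) carries up to `C(n - |U|, k - d)` members, any other trace only
`O(n ^ (k - d - 1))`. Call a transversal heavy if its class is too large to avoid a single member
of `G`; then any two heavy transversals meet, so as functions `i ↦ point in Tᵢ` they form an
intersecting family in `∏ Tᵢ`. Subtracting the first coordinate from every other one (after
identifying `Tᵢ` with `ℤ/tᵢ` and embedding `Fin t₁ ↪ Fin tᵢ`) is injective on such a family, so it
has at most `∏_{i ≠ 1} tᵢ` members, and when all other `tᵢ ≥ 3` equality forces a star. A star of
heavy transversals would make `G` itself a star, so a non-star `G` has fewer heavy transversals and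
is beaten for large `n` by the star of a point of `T₁`, of size `∏_{i ≠ 1} tᵢ · C(n - |U|, k - d)`.
-/

open Finset Function

lemma Nat.choose_le_choose_of_le_half {n r s : ℕ} (hrs : r ≤ s) (hs : s ≤ n / 2) :
    n.choose r ≤ n.choose s := by
  induction s, hrs using Nat.le_induction with
  | base => exact le_rfl
  | succ s _ ih => exact (ih (by omega)).trans (Nat.choose_le_succ_of_lt_half_left (by omega))

lemma Nat.mul_mul_choose_pred_le_choose {a m N : ℕ} (hm : 0 < m) (h : a * m ^ 2 + m ≤ N + 1) :
    a * (m * N.choose (m - 1)) ≤ N.choose m := by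
  refine Nat.le_of_mul_le_mul_right ?_ hm
  have key := Nat.choose_succ_right_eq N (m - 1)
  rw [Nat.sub_add_cancel hm] at key
  rw [key]
  calc a * (m * N.choose (m - 1)) * m = N.choose (m - 1) * (a * m ^ 2) := by ring
    _ ≤ N.choose (m - 1) * (N - (m - 1)) := Nat.mul_le_mul_left _ (by omega)

lemma Fintype.card_le_two_of_forall_or {β : Type*} [Fintype β] {p q : β → Prop}
    (hp : ∀ a b, p a → p b → a = b) (hq : ∀ a b, q a → q b → a = b) (h : ∀ a, p a ∨ q a) :
    Fintype.card β ≤ 2 := by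
  classical
  calc Fintype.card β = #(univ : Finset β) := rfl
    _ ≤ #{a | p a} + #{a | q a} := by
      refine (card_le_card fun a _ => ?_).trans (card_union_le _ _)
      simpa using h a
    _ ≤ 1 + 1 := add_le_add
        (card_le_one.2 fun a ha b hb => hp a b (by simpa using ha) (by simpa using hb))
        (card_le_one.2 fun a ha b hb => hq a b (by simpa using ha) (by simpa using hb))

section Products

variable {ι : Type*} [Fintype ι] [DecidableEq ι]

section Nat

variable {t : ι → ℕ} {z j : ι}

lemma prod_erase_le_prod_erase (hz : 0 < t z) (hzj : t z ≤ t j) :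
    ∏ i ∈ univ.erase j, t i ≤ ∏ i ∈ univ.erase z, t i := by
  refine Nat.le_of_mul_le_mul_left ?_ hz
  calc t z * ∏ i ∈ univ.erase j, t i ≤ t j * ∏ i ∈ univ.erase j, t i := by gcongr
    _ = t z * ∏ i ∈ univ.erase z, t i := by
      rw [mul_prod_erase _ _ (mem_univ z), mul_prod_erase _ _ (mem_univ j)]

lemma eq_of_prod_erase_le_prod_erase (hP : 0 < ∏ i ∈ univ.erase z, t i) (hzj : t z ≤ t j)
    (h : ∏ i ∈ univ.erase z, t i ≤ ∏ i ∈ univ.erase j, t i) : t j = t z := by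
  refine le_antisymm (Nat.le_of_mul_le_mul_right ?_ (hP.trans_le h)) hzj
  calc t j * ∏ i ∈ univ.erase j, t i = t z * ∏ i ∈ univ.erase z, t i := by
        rw [mul_prod_erase _ _ (mem_univ z), mul_prod_erase _ _ (mem_univ j)]
    _ ≤ t z * ∏ i ∈ univ.erase j, t i := by gcongr

end Nat

variable {α : ι → Type*}

lemma card_filter_apply_eq [∀ i, Fintype (α i)] [∀ i, DecidableEq (α i)] (z : ι) (a : α z) :
    #{f : ∀ i, α i | f z = a} = ∏ i ∈ univ.erase z, Fintype.card (α i) := by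
  have : ({f : ∀ i, α i | f z = a} : Finset _) =
      Fintype.piFinset (update (fun i => (univ : Finset (α i))) z {a}) := by
    ext f
    simp only [mem_filter, mem_univ, true_and, Fintype.mem_piFinset]
    refine ⟨fun h i => ?_, fun h => by simpa using h z⟩
    rcases eq_or_ne i z with rfl | hi
    · simp [h]
    · simp [hi]
  rw [this, Fintype.card_piFinset, ← mul_prod_erase _ _ (mem_univ z)]
  simp only [update_self, card_singleton, one_mul]
  refine prod_congr rfl fun i hi => ?_
  simp [update_of_ne (ne_of_mem_erase hi)]

lemma forall_of_update_stable {P : (∀ i, α i) → Prop} {z : ι} {x : ∀ i, α i} (hx : P x)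
    (hstep : ∀ y, y z = x z → P y → ∀ i ≠ z, ∀ a, P (update y i a)) :
    ∀ y, y z = x z → P y := by
  intro y hy
  have key : ∀ s : Finset ι, z ∉ s → P (s.piecewise y x) := by
    intro s
    induction s using Finset.induction_on with
    | empty => simpa using hx
    | insert i s hi ih =>
      intro hz
      have hzs : z ∉ s := fun h => hz (mem_insert_of_mem h)
      rw [piecewise_insert]
      exact hstep _ (piecewise_eq_of_notMem _ _ _ hzs) (ih hzs) i
        (fun h => hz (h ▸ mem_insert_self i s)) _
  convert key (univ.erase z) (notMem_erase z univ) using 1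
  ext i
  rcases eq_or_ne i z with rfl | hi
  · simp [hy]
  · simp [hi]

end Products

/-! ### Intersecting families of functions -/

def IntersectingPi {ι : Type*} {α : ι → Type*} (F : Finset (∀ i, α i)) : Prop :=
  ∀ f ∈ F, ∀ g ∈ F, ∃ i, f i = g i

namespace IntersectingPi

variable {ι : Type*} {α : ι → Type*}

lemma map_piCongrRight {β : ι → Type*} {F : Finset (∀ i, α i)} (hF : IntersectingPi F)
    (e : ∀ i, α i ≃ β i) : IntersectingPi (F.map (Equiv.piCongrRight e).toEmbedding) := by
  intro f hf g hg
  obtain ⟨f', hf', rfl⟩ := mem_map.1 hf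
  obtain ⟨g', hg', rfl⟩ := mem_map.1 hg
  obtain ⟨i, hi⟩ := hF f' hf' g' hg'
  exact ⟨i, by simp [hi]⟩

section AddGroup

variable [∀ i, AddGroup (α i)] {z : ι}

def diffMap (φ : ∀ i, α z → α i) (f : ∀ i, α i) : ∀ i, α i := fun i => f i - φ i (f z)

lemma diffMap_apply_self {φ : ∀ i, α z → α i} (hφz : ∀ c, φ z c = c) (f : ∀ i, α i) :
    diffMap φ f z = 0 := by
  simp [diffMap, hφz]

lemma diffMap_injOn {φ : ∀ i, α z → α i} (hφ : ∀ i, Injective (φ i)) {F : Finset (∀ i, α i)}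
    (hF : IntersectingPi F) : Set.InjOn (diffMap φ) F := by
  intro f hf g hg hfg
  obtain ⟨i, hi⟩ := hF f hf g hg
  have hz : f z = g z := hφ i (by simpa [diffMap, hi] using congrFun hfg i)
  ext i
  simpa [diffMap, hz] using congrFun hfg i

/-! Here `s` is a right inverse of `diffMap φ` on `{y | y z = 0}` with intersecting image: when
`diffMap φ` maps an intersecting family `F` bijectively onto that set, `s` is the inverse map. -/
section Inverse

variable {φ : ∀ i, α z → α i} {s : (∀ i, α i) → ∀ i, α i}
  (hs : ∀ y, y z = 0 → diffMap φ (s y) = y)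
include hs

lemma apply_eq_of_diffMap_eq {y : ∀ i, α i} (hy : y z = 0) (i : ι) :
    s y i = y i + φ i (s y z) := by
  rw [← congrFun (hs y hy) i, diffMap, sub_add_cancel]

variable (hφ : ∀ i, Injective (φ i))
include hφ

lemma apply_self_eq_of_apply_eq {y y' : ∀ i, α i} (hy : y z = 0) (hy' : y' z = 0) {i : ι}
    (hyi : y i = y' i) (hi : s y i = s y' i) : s y z = s y' z := by
  rw [apply_eq_of_diffMap_eq hs hy, apply_eq_of_diffMap_eq hs hy', hyi] at hi
  exact hφ i (add_left_cancel hi)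

variable [DecidableEq ι] (hint : ∀ y y', y z = 0 → y' z = 0 → ∃ i, s y i = s y' i)
include hint

lemma apply_update_or {y : ∀ i, α i} (hy : y z = 0) {j : ι} (hj : j ≠ z) (ε ε' : α j) :
    s (update y j ε) z = s (update y j ε') z ∨ s (update y j ε) j = s (update y j ε') j := by
  have hyj : ∀ ε, update y j ε z = 0 := fun ε => by rw [update_of_ne hj.symm, hy]
  obtain ⟨i, hi⟩ := hint _ _ (hyj ε) (hyj ε')
  rcases eq_or_ne i j with rfl | hij
  · exact .inr hi
  · exact .inl (apply_self_eq_of_apply_eq hs hφ (hyj ε) (hyj ε') (by simp [hij]) hi)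

lemma apply_update_eq_of_apply_update_ne {y : ∀ i, α i} (hy : y z = 0) {j : ι} (hj : j ≠ z)
    {ε : α j} (hε : s (update y j ε) z ≠ s y z) (ε' : α j) : s (update y j ε') j = s y j := by
  have hor := apply_update_or hs hφ hint hy hj
  have h₀ : ∀ ε', s (update y j ε') z ≠ s y z → s (update y j ε') j = s y j := fun ε' h => by
    simpa using (hor ε' (y j)).resolve_left (by simpa using h)
  by_cases h : s (update y j ε') z = s y z
  · rw [← h₀ ε hε]
    exact (hor ε' ε).resolve_left (h ▸ fun h' => hε h'.symm)
  · exact h₀ ε' h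

/-- Along the line `ε ↦ update q j ε` the `z`-coordinate of `s` is injective, and so is its
`i`-coordinate; a point of the parallel line through `update q i a` disagreeing with `W` at `j`
would have to meet each of the `≥ 3` points of the first line at `z` or at `i`. -/
lemma apply_update_update_eq {j : ι} [Fintype (α j)] (hj : j ≠ z) (h3 : 3 ≤ Fintype.card (α j))
    {q : ∀ i, α i} (hq : q z = 0) {W : α j} (hW : ∀ ε, s (update q j ε) j = W) {i : ι}
    (hi : i ≠ z) (a : α i) (ε' : α j) : s (update (update q i a) j ε') j = W := by
  rcases eq_or_ne i j with rfl | hij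
  · simpa using hW ε'
  by_contra hne
  set p : α j → ∀ i, α i := fun ε => update q j ε
  set p' := update (update q i a) j ε'
  have hp : ∀ ε, p ε z = 0 := fun ε => by simp [p, hj.symm, hq]
  have hp' : p' z = 0 := by simp [p', hj.symm, hi.symm, hq]
  have hpj : ∀ ε, W = ε + φ j (s (p ε) z) := fun ε => by
    simpa [p] using (hW ε).symm.trans (apply_eq_of_diffMap_eq hs (hp ε) j)
  have hpz : ∀ ε₁ ε₂, s (p ε₁) z = s (p ε₂) z → ε₁ = ε₂ := fun ε₁ ε₂ h =>
    add_right_cancel ((hpj ε₁).symm.trans (h ▸ hpj ε₂))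
  have hor : ∀ ε, s (p ε) z = s p' z ∨ s (p ε) i = s p' i := fun ε => by
    obtain ⟨l, hl⟩ := hint _ _ (hp ε) hp'
    by_cases hlj : l = j
    · subst hlj; exact absurd (hW ε ▸ hl).symm hne
    by_cases hli : l = i
    · exact .inr (hli ▸ hl)
    · exact .inl (apply_self_eq_of_apply_eq hs hφ (hp ε) hp' (by simp [p, p', hlj, hli]) hl)
  refine absurd (Fintype.card_le_two_of_forall_or
    (fun ε₁ ε₂ h₁ h₂ => hpz ε₁ ε₂ (h₁.trans h₂.symm)) (fun ε₁ ε₂ h₁ h₂ => hpz ε₁ ε₂ ?_) hor)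
    (by omega)
  have e := h₁.trans h₂.symm
  rw [apply_eq_of_diffMap_eq hs (hp ε₁), apply_eq_of_diffMap_eq hs (hp ε₂)] at e
  simp only [p, update_of_ne hij] at e
  exact hφ i (add_left_cancel e)

/-- Either `s · z` is constant, or it changes along a line in some direction `j`; that line is
then constant in coordinate `j`, and this spreads to every parallel line. -/
theorem exists_forall_apply_eq_of_diffMap_eq [Fintype ι] [∀ i, Fintype (α i)]
    (h3 : ∀ i ≠ z, 3 ≤ Fintype.card (α i)) : ∃ j c, ∀ y, y z = 0 → s y j = c := by
  by_cases hcon : ∀ y, y z = 0 → ∀ j ≠ z, ∀ ε : α j, s (update y j ε) z = s y z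
  · refine ⟨z, s 0 z, forall_of_update_stable (P := fun y => s y z = s 0 z) rfl ?_⟩
    exact fun y hy hPy i hi a => (hcon y hy i hi a).trans hPy
  push Not at hcon
  obtain ⟨y₀, hy₀, j, hj, ε, hε⟩ := hcon
  refine ⟨j, s y₀ j, fun y hy => ?_⟩
  have key := forall_of_update_stable (P := fun q => ∀ ε', s (update q j ε') j = s y₀ j)
    (apply_update_eq_of_apply_update_ne hs hφ hint hy₀ hj hε)
    (fun q hq hPq i hi a => apply_update_update_eq hs hφ hint hj (h3 j hj) (hq.trans hy₀) hPq hi a)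
    y (hy.trans hy₀.symm) (y j)
  simpa using key

end Inverse

variable [Fintype ι] [DecidableEq ι] [∀ i, Fintype (α i)] [∀ i, DecidableEq (α i)]
  {φ : ∀ i, α z → α i} (hφz : ∀ c, φ z c = c)
include hφz

lemma image_diffMap_subset (F : Finset (∀ i, α i)) :
    F.image (diffMap φ) ⊆ ({y | y z = 0} : Finset (∀ i, α i)) := by
  intro y hy
  obtain ⟨f, -, rfl⟩ := mem_image.1 hy
  simp [diffMap_apply_self hφz]

variable (hφ : ∀ i, Injective (φ i))
include hφ

theorem card_le_of_addGroup {F : Finset (∀ i, α i)} (hF : IntersectingPi F) :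
    #F ≤ ∏ i ∈ univ.erase z, Fintype.card (α i) := by
  rw [← card_filter_apply_eq z (0 : α z), ← card_image_of_injOn (diffMap_injOn hφ hF)]
  exact card_le_card (image_diffMap_subset hφz F)

theorem exists_forall_apply_eq_of_addGroup (h3 : ∀ i ≠ z, 3 ≤ Fintype.card (α i))
    {F : Finset (∀ i, α i)} (hF : IntersectingPi F)
    (hcard : ∏ i ∈ univ.erase z, Fintype.card (α i) ≤ #F) : ∃ j c, ∀ f ∈ F, f j = c := by
  have himage : F.image (diffMap φ) = ({y | y z = 0} : Finset (∀ i, α i)) := by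
    refine eq_of_subset_of_card_le (image_diffMap_subset hφz F) ?_
    rwa [card_filter_apply_eq, card_image_of_injOn (diffMap_injOn hφ hF)]
  have hsurj : ∀ y, ∃ f, y z = 0 → f ∈ F ∧ diffMap φ f = y := fun y => by
    by_cases hy : y z = 0
    · obtain ⟨f, hf, rfl⟩ := mem_image.1 (himage ▸ mem_filter.2 ⟨mem_univ y, hy⟩)
      exact ⟨f, fun _ => ⟨hf, rfl⟩⟩
    · exact ⟨y, fun h => absurd h hy⟩
  choose s hs using hsurj
  obtain ⟨j, c, hc⟩ := exists_forall_apply_eq_of_diffMap_eq (fun y hy => (hs y hy).2) hφ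
    (fun y y' hy hy' => hF _ (hs y hy).1 _ (hs y' hy').1) h3
  refine ⟨j, c, fun f hf => ?_⟩
  have hy := diffMap_apply_self hφz f
  rw [← hc _ hy, diffMap_injOn hφ hF (hs _ hy).1 hf (hs _ hy).2]

end AddGroup

variable [Fintype ι] [DecidableEq ι] [∀ i, Fintype (α i)] {z : ι}
  (hz : 0 < Fintype.card (α z)) (hmin : ∀ i, Fintype.card (α z) ≤ Fintype.card (α i))
include hz hmin

theorem card_le_prod_erase {F : Finset (∀ i, α i)} (hF : IntersectingPi F) :
    #F ≤ ∏ i ∈ univ.erase z, Fintype.card (α i) := by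
  have : ∀ i, NeZero (Fintype.card (α i)) := fun i => ⟨(hz.trans_le (hmin i)).ne'⟩
  simpa using card_le_of_addGroup (α := fun i => Fin (Fintype.card (α i)))
    (fun _ => rfl) (fun i => Fin.castLE_injective (hmin i))
    (hF.map_piCongrRight fun i => Fintype.equivFin (α i))

theorem exists_forall_apply_eq (h3 : ∀ i ≠ z, 3 ≤ Fintype.card (α i)) {F : Finset (∀ i, α i)}
    (hF : IntersectingPi F) (hcard : ∏ i ∈ univ.erase z, Fintype.card (α i) ≤ #F) :
    ∃ j c, ∀ f ∈ F, f j = c := by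
  have : ∀ i, NeZero (Fintype.card (α i)) := fun i => ⟨(hz.trans_le (hmin i)).ne'⟩
  set e := fun i => Fintype.equivFin (α i)
  obtain ⟨j, c, hc⟩ := exists_forall_apply_eq_of_addGroup
    (α := fun i => Fin (Fintype.card (α i))) (fun _ => rfl)
    (fun i => Fin.castLE_injective (hmin i)) (by simpa using h3) (hF.map_piCongrRight e)
    (by simpa using hcard)
  refine ⟨j, (e j).symm c, fun f hf => ?_⟩
  rw [Equiv.eq_symm_apply]
  exact hc _ (mem_map_of_mem _ hf)

end IntersectingPi

section SetFamilies

variable {α : Type*} [DecidableEq α]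

lemma sdiff_injOn_inter_eq (U S : Finset α) : Set.InjOn (· \ U) {A : Finset α | A ∩ U = S} := by
  intro A hA B hB h
  rw [← sdiff_union_inter A U, ← sdiff_union_inter B U]
  simp_all

lemma union_inter_eq_and_union_sdiff_eq {S R U : Finset α} (hS : S ⊆ U) (hR : Disjoint R U) :
    (S ∪ R) ∩ U = S ∧ (S ∪ R) \ U = R := by
  rw [union_inter_distrib_right, union_sdiff_distrib, inter_eq_left.2 hS,
    sdiff_eq_empty_iff_subset.2 hS, disjoint_iff_inter_eq_empty.1 hR, sdiff_eq_self_of_disjoint hR,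
    union_empty, empty_union]
  exact ⟨rfl, rfl⟩

lemma card_powersetCard_filter_mem_le (W : Finset α) (m : ℕ) (x : α) :
    #{R ∈ powersetCard m W | x ∈ R} ≤ (#W).choose (m - 1) := by
  rw [← card_powersetCard]
  refine card_le_card_of_injOn (·.erase x) (fun R hR => ?_) (fun R hR R' hR' h => ?_)
  · obtain ⟨hR, hx⟩ := mem_filter.1 hR
    obtain ⟨hRW, rfl⟩ := mem_powersetCard.1 hR
    exact mem_powersetCard.2 ⟨(erase_subset x R).trans hRW, card_erase_of_mem hx⟩
  · rw [← insert_erase (mem_filter.1 hR).2, ← insert_erase (mem_filter.1 hR').2]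
    exact congrArg _ h

lemma card_powersetCard_filter_inter_nonempty_le (W B : Finset α) (m : ℕ) :
    #{R ∈ powersetCard m W | (R ∩ B).Nonempty} ≤ #B * (#W).choose (m - 1) := by
  calc #{R ∈ powersetCard m W | (R ∩ B).Nonempty}
      ≤ #(B.biUnion fun x => {R ∈ powersetCard m W | x ∈ R}) := card_le_card fun R hR => by
        obtain ⟨hR, x, hx⟩ := mem_filter.1 hR
        exact mem_biUnion.2 ⟨x, (mem_inter.1 hx).2, mem_filter.2 ⟨hR, (mem_inter.1 hx).1⟩⟩
    _ ≤ ∑ x ∈ B, #{R ∈ powersetCard m W | x ∈ R} := card_biUnion_le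
    _ ≤ ∑ _x ∈ B, (#W).choose (m - 1) :=
        sum_le_sum fun x _ => card_powersetCard_filter_mem_le W m x
    _ = #B * (#W).choose (m - 1) := by rw [sum_const, smul_eq_mul]

variable [Fintype α]

lemma card_filter_inter_eq_le {k : ℕ} {F : Finset (Finset α)} (hF : ∀ A ∈ F, #A = k)
    (U S : Finset α) : #{A ∈ F | A ∩ U = S} ≤ (#Uᶜ).choose (k - #S) := by
  rw [← card_powersetCard]
  refine card_le_card_of_injOn (· \ U) (fun A hA => ?_)
    ((sdiff_injOn_inter_eq U S).mono fun A hA => (mem_filter.1 hA).2)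
  obtain ⟨hAF, rfl⟩ := mem_filter.1 hA
  refine mem_powersetCard.2 ⟨fun a ha => by simpa using (mem_sdiff.1 ha).2, ?_⟩
  have := card_sdiff_add_card_inter A U
  rw [hF A hAF] at this
  dsimp only
  omega

lemma card_filter_inter_eq_le_of_disjoint {m : ℕ} {F : Finset (Finset α)} (U : Finset α)
    {S B : Finset α} (hSB : Disjoint S B) (hF : ∀ A ∈ F, #A = #S + m ∧ (A ∩ B).Nonempty) :
    #{A ∈ F | A ∩ U = S} ≤ #(B \ U) * (#Uᶜ).choose (m - 1) := by
  refine le_trans ?_ (card_powersetCard_filter_inter_nonempty_le Uᶜ (B \ U) m)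
  refine card_le_card_of_injOn (· \ U) (fun A hA => ?_)
    ((sdiff_injOn_inter_eq U S).mono fun A hA => (mem_filter.1 hA).2)
  obtain ⟨hAF, rfl⟩ := mem_filter.1 hA
  obtain ⟨hAcard, x, hx⟩ := hF A hAF
  obtain ⟨hxA, hxB⟩ := mem_inter.1 hx
  have hxU : x ∉ U := fun hxU => disjoint_left.1 hSB (mem_inter.2 ⟨hxA, hxU⟩) hxB
  refine mem_filter.2 ⟨mem_powersetCard.2 ⟨fun a ha => by simpa using (mem_sdiff.1 ha).2, ?_⟩,
    x, by simp [hxA, hxB, hxU]⟩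
  have := card_sdiff_add_card_inter A U
  dsimp only
  omega

end SetFamilies

/-! ### Transversals of a disjoint family -/

section Transversal

variable {α ι : Type*}

lemma eq_of_mem_of_mem {T : ι → Finset α} (hT : Pairwise (Disjoint on T)) {i j : ι} {a : α}
    (hi : a ∈ T i) (hj : a ∈ T j) : i = j :=
  by_contra fun h => disjoint_left.1 (hT h) hi hj

variable [DecidableEq α] [Fintype ι] (T : ι → Finset α)

def transversal (f : ∀ i, T i) : Finset α := univ.image fun i => (f i : α)

variable {T}

@[simp] lemma mem_transversal {f : ∀ i, T i} {a : α} :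
    a ∈ transversal T f ↔ ∃ i, (f i : α) = a := by
  simp [transversal]

lemma transversal_subset_biUnion (f : ∀ i, T i) : transversal T f ⊆ univ.biUnion T := by
  intro a ha
  obtain ⟨i, rfl⟩ := mem_transversal.1 ha
  exact mem_biUnion.2 ⟨i, mem_univ i, (f i).2⟩

lemma exists_apply_eq_disjoint_transversal [DecidableEq ι] {B : Finset α} {j : ι} (x : T j)
    (hx : ↑x ∉ B) (hB : ∀ i ≠ j, (T i \ B).Nonempty) :
    ∃ f : ∀ i, T i, f j = x ∧ Disjoint (transversal T f) B := by
  have hg : ∀ i, ∃ a : T i, ↑a ∉ B := fun i => by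
    rcases eq_or_ne i j with rfl | hij
    · exact ⟨x, hx⟩
    · obtain ⟨a, ha⟩ := hB i hij
      exact ⟨⟨a, (mem_sdiff.1 ha).1⟩, (mem_sdiff.1 ha).2⟩
  choose g hg using hg
  refine ⟨update g j x, update_self .., disjoint_left.2 fun a ha haB => ?_⟩
  obtain ⟨i, rfl⟩ := mem_transversal.1 ha
  rcases eq_or_ne i j with rfl | hij
  · exact hx (by simpa using haB)
  · exact hg i (by simpa [hij] using haB)

variable (hT : Pairwise (Disjoint on T))
include hT

lemma transversal_inter_eq (f : ∀ i, T i) (i : ι) : transversal T f ∩ T i = {(f i : α)} := by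
  ext a
  simp only [mem_inter, mem_transversal, mem_singleton]
  constructor
  · rintro ⟨⟨j, rfl⟩, ha⟩
    rw [eq_of_mem_of_mem hT (f j).2 ha]
  · rintro rfl
    exact ⟨⟨i, rfl⟩, (f i).2⟩

lemma transversal_injective : Injective (transversal T) := by
  intro f g h
  ext i
  exact singleton_injective <|
    (transversal_inter_eq hT f i).symm.trans (h ▸ transversal_inter_eq hT g i)

lemma card_transversal (f : ∀ i, T i) : #(transversal T f) = Fintype.card ι :=
  card_image_of_injective _ fun i j h => eq_of_mem_of_mem hT (f i).2 (h ▸ (f j).2)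

lemma exists_apply_eq_of_transversal_inter_nonempty {f g : ∀ i, T i}
    (h : (transversal T f ∩ transversal T g).Nonempty) : ∃ i, f i = g i := by
  obtain ⟨a, ha⟩ := h
  simp only [mem_inter, mem_transversal] at ha
  obtain ⟨⟨i, rfl⟩, j, hj⟩ := ha
  obtain rfl := eq_of_mem_of_mem hT (g j).2 (hj ▸ (f i).2)
  exact ⟨j, Subtype.ext hj.symm⟩

lemma card_inter_biUnion (A : Finset α) : #(A ∩ univ.biUnion T) = ∑ i, #(A ∩ T i) := by
  rw [inter_biUnion, card_biUnion]
  exact fun i _ j _ hij => (hT hij).mono inter_subset_right inter_subset_right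

section Meets

variable {A : Finset α} (hA : ∀ i, (A ∩ T i).Nonempty)
include hA

lemma card_inter_add_le (i : ι) :
    #(A ∩ T i) + (Fintype.card ι - 1) ≤ #(A ∩ univ.biUnion T) := by
  classical
  rw [card_inter_biUnion hT, ← add_sum_erase _ _ (mem_univ i)]
  have := card_nsmul_le_sum (univ.erase i) (fun j => #(A ∩ T j)) 1 fun j _ => (hA j).card_pos
  rw [card_erase_of_mem (mem_univ i), card_univ, smul_eq_mul, mul_one] at this
  omega

lemma card_le_card_inter_biUnion : Fintype.card ι ≤ #(A ∩ univ.biUnion T) := by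
  rw [card_inter_biUnion hT]
  have := card_nsmul_le_sum univ (fun j => #(A ∩ T j)) 1 fun j _ => (hA j).card_pos
  rwa [card_univ, smul_eq_mul, mul_one] at this

lemma exists_transversal_eq_inter (hcard : #(A ∩ univ.biUnion T) ≤ Fintype.card ι) :
    ∃ f, transversal T f = A ∩ univ.biUnion T := by
  have hone : ∀ i, ∃ a, A ∩ T i = {a} := fun i => card_eq_one.1 <| by
    have := card_inter_add_le hT hA i
    have := (hA i).card_pos
    omega
  choose a ha using hone
  refine ⟨fun i => ⟨a i, (mem_inter.1 (ha i ▸ mem_singleton_self (a i))).2⟩, ?_⟩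
  ext x
  simp only [mem_transversal, inter_biUnion, mem_biUnion, mem_univ, true_and, ha, mem_singleton,
    eq_comm]

lemma sdiff_nonempty_of_card_eq {m : ℕ} (hAcard : #A = Fintype.card ι + m) {i : ι}
    (hi : m + 2 ≤ #(T i)) : (T i \ A).Nonempty := by
  rw [← card_pos]
  have h₁ := card_sdiff_add_card_inter (T i) A
  have h₂ := card_inter_add_le hT hA i
  have h₃ := card_le_card (inter_subset_left : A ∩ univ.biUnion T ⊆ A)
  have h₄ : 0 < Fintype.card ι := Fintype.card_pos_iff.2 ⟨i⟩
  rw [inter_comm] at h₁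
  omega

end Meets

lemma card_le_prod_erase_of_card_eq [DecidableEq ι] {G : Finset (Finset α)}
    (hG : ∀ A ∈ G, #A = Fintype.card ι ∧ ∀ i, (A ∩ T i).Nonempty)
    (hGint : ∀ A ∈ G, ∀ B ∈ G, (A ∩ B).Nonempty) {z : ι} (hz : 0 < #(T z))
    (hmin : ∀ i, #(T z) ≤ #(T i)) : #G ≤ ∏ i ∈ univ.erase z, #(T i) := by
  have hsub : G ⊆ ({f | transversal T f ∈ G} : Finset (∀ i, T i)).image (transversal T) := by
    intro A hA
    obtain ⟨hAcard, hAT⟩ := hG A hA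
    have hAU : A ∩ univ.biUnion T = A := eq_of_subset_of_card_le inter_subset_left
      (hAcard ▸ card_le_card_inter_biUnion hT hAT)
    obtain ⟨f, hf⟩ := exists_transversal_eq_inter hT hAT (by rw [hAU, hAcard])
    rw [hAU] at hf
    exact mem_image.2 ⟨f, mem_filter.2 ⟨mem_univ _, hf ▸ hA⟩, hf⟩
  have hint : IntersectingPi ({f | transversal T f ∈ G} : Finset (∀ i, T i)) :=
    fun f hf g hg => exists_apply_eq_of_transversal_inter_nonempty hT
      (hGint _ (mem_filter.1 hf).2 _ (mem_filter.1 hg).2)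
  calc #G ≤ #({f | transversal T f ∈ G} : Finset (∀ i, T i)) :=
        (card_le_card hsub).trans card_image_le
    _ ≤ ∏ i ∈ univ.erase z, #(T i) := by
        simpa using hint.card_le_prod_erase (α := fun i => T i) (by simpa using hz)
          (by simpa using hmin)

end Transversal

/-! ### Trace classes and heavy transversals -/

section Traces

variable {α ι : Type*} [Fintype α] [DecidableEq α] [Fintype ι] [DecidableEq ι]

/-- The threshold `m * C(|(⋃ Tᵢ)ᶜ|, m - 1)` bounds the trace class of every transversal that some
member of `G` misses (`card_filter_inter_eq_transversal_le`). -/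
def heavyTransversals (T : ι → Finset α) (G : Finset (Finset α)) (m : ℕ) : Finset (∀ i, T i) :=
  {f | m * (#(univ.biUnion T)ᶜ).choose (m - 1) < #{A ∈ G | A ∩ univ.biUnion T = transversal T f}}

variable {T : ι → Finset α} (hT : Pairwise (Disjoint on T))
include hT

lemma card_mul_choose_le_card_filter_mem {m : ℕ} {H : Finset (Finset α)}
    (hH : ∀ A, A ∈ H ↔ #A = Fintype.card ι + m ∧ ∀ i, (A ∩ T i).Nonempty) {z : ι} (x : T z) :
    (∏ i ∈ univ.erase z, #(T i)) * (#(univ.biUnion T)ᶜ).choose m ≤ #{A ∈ H | ↑x ∈ A} := by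
  set U := univ.biUnion T
  have hcard : #(({f : ∀ i, T i | f z = x} : Finset _) ×ˢ powersetCard m Uᶜ) =
      (∏ i ∈ univ.erase z, #(T i)) * (#Uᶜ).choose m := by
    rw [card_product, card_powersetCard]
    congr 1
    convert card_filter_apply_eq (α := fun i => ↥(T i)) z x using 2 with i
    simp
  rw [← hcard]
  refine card_le_card_of_injOn (fun p => transversal T p.1 ∪ p.2) ?_ ?_
  · rintro ⟨f, R⟩ h
    simp only [coe_product, Set.mem_prod, mem_coe, mem_filter, mem_univ, true_and,
      mem_powersetCard] at h
    obtain ⟨rfl, hRU, rfl⟩ := h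
    have hdisj : Disjoint (transversal T f) R :=
      disjoint_of_subset_left (transversal_subset_biUnion f)
        (subset_compl_iff_disjoint_left.1 hRU)
    refine mem_filter.2 ⟨(hH _).2 ⟨?_, fun i => ⟨f i, ?_⟩⟩,
      mem_union_left _ (mem_transversal.2 ⟨z, rfl⟩)⟩
    · rw [card_union_of_disjoint hdisj, card_transversal hT]
    · exact mem_inter.2 ⟨mem_union_left _ (mem_transversal.2 ⟨i, rfl⟩), (f i).2⟩
  · rintro ⟨f, R⟩ h ⟨f', R'⟩ h' heq
    simp only [coe_product, Set.mem_prod, mem_coe, mem_powersetCard] at h h'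
    obtain ⟨hf₁, hf₂⟩ := union_inter_eq_and_union_sdiff_eq (transversal_subset_biUnion f)
      (subset_compl_iff_disjoint_right.1 h.2.1)
    obtain ⟨hf'₁, hf'₂⟩ := union_inter_eq_and_union_sdiff_eq (transversal_subset_biUnion f')
      (subset_compl_iff_disjoint_right.1 h'.2.1)
    simp only at heq
    exact Prod.ext (transversal_injective hT (by rw [← hf₁, heq, hf'₁])) (by rw [← hf₂, heq, hf'₂])

variable {m : ℕ} {G : Finset (Finset α)}
  (hG : ∀ A ∈ G, #A = Fintype.card ι + m ∧ ∀ i, (A ∩ T i).Nonempty)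
include hG

lemma card_filter_inter_eq_le_of_notMem_image (hm : 0 < m) (hN : 2 * m ≤ #(univ.biUnion T)ᶜ)
    {S : Finset α} (hS : S ∉ (heavyTransversals T G m).image (transversal T)) :
    #{A ∈ G | A ∩ univ.biUnion T = S} ≤ m * (#(univ.biUnion T)ᶜ).choose (m - 1) := by
  rcases ({A ∈ G | A ∩ univ.biUnion T = S} : Finset _).eq_empty_or_nonempty with h | ⟨A, hA⟩
  · simp [h]
  obtain ⟨hAG, rfl⟩ := mem_filter.1 hA
  obtain ⟨hAcard, hAT⟩ := hG A hAG
  by_cases hd : #(A ∩ univ.biUnion T) ≤ Fintype.card ι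
  · obtain ⟨f, hf⟩ := exists_transversal_eq_inter hT hAT hd
    have hf' : f ∉ heavyTransversals T G m := fun h => hS (hf ▸ mem_image_of_mem _ h)
    simpa [heavyTransversals, hf] using hf'
  calc #{B ∈ G | B ∩ univ.biUnion T = A ∩ univ.biUnion T}
      ≤ (#(univ.biUnion T)ᶜ).choose (Fintype.card ι + m - #(A ∩ univ.biUnion T)) :=
        card_filter_inter_eq_le (fun B hB => (hG B hB).1) _ _
    _ ≤ (#(univ.biUnion T)ᶜ).choose (m - 1) :=
        Nat.choose_le_choose_of_le_half (by omega) (by omega)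
    _ ≤ m * (#(univ.biUnion T)ᶜ).choose (m - 1) := Nat.le_mul_of_pos_left _ hm

theorem card_le_card_heavyTransversals_mul_add (hm : 0 < m) (hN : 2 * m ≤ #(univ.biUnion T)ᶜ) :
    #G ≤ #(heavyTransversals T G m) * (#(univ.biUnion T)ᶜ).choose m +
      2 ^ #(univ.biUnion T) * (m * (#(univ.biUnion T)ᶜ).choose (m - 1)) := by
  set U := univ.biUnion T
  set heavyTraces := (heavyTransversals T G m).image (transversal T)
  have hsub : heavyTraces ⊆ U.powerset :=
    image_subset_iff.2 fun f _ => mem_powerset.2 (transversal_subset_biUnion f)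
  rw [card_eq_sum_card_fiberwise (f := (· ∩ U)) (t := U.powerset)
    (fun A _ => mem_powerset.2 inter_subset_right), ← sum_sdiff hsub, add_comm]
  gcongr
  · calc ∑ S ∈ heavyTraces, #{A ∈ G | A ∩ U = S} ≤ #heavyTraces * (#Uᶜ).choose m := by
          refine sum_le_card_nsmul _ _ _ fun S hS => ?_
          obtain ⟨f, -, rfl⟩ := mem_image.1 hS
          simpa [card_transversal hT] using
            card_filter_inter_eq_le (fun B hB => (hG B hB).1) U (transversal T f)
      _ ≤ #(heavyTransversals T G m) * (#Uᶜ).choose m := by gcongr; exact card_image_le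
  · calc ∑ S ∈ U.powerset \ heavyTraces, #{A ∈ G | A ∩ U = S}
          ≤ #(U.powerset \ heavyTraces) * (m * (#Uᶜ).choose (m - 1)) :=
          sum_le_card_nsmul _ _ _ fun S hS =>
            card_filter_inter_eq_le_of_notMem_image hT hG hm hN (mem_sdiff.1 hS).2
      _ ≤ 2 ^ #U * (m * (#Uᶜ).choose (m - 1)) := by
          gcongr
          exact (card_le_card sdiff_subset).trans (card_powerset U).le

variable (hGint : ∀ A ∈ G, ∀ B ∈ G, (A ∩ B).Nonempty)
include hGint

omit [DecidableEq ι] in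
lemma card_filter_inter_eq_transversal_le {B : Finset α} (hB : B ∈ G) {f : ∀ i, T i}
    (hfB : Disjoint (transversal T f) B) :
    #{A ∈ G | A ∩ univ.biUnion T = transversal T f} ≤
      m * (#(univ.biUnion T)ᶜ).choose (m - 1) := by
  refine (card_filter_inter_eq_le_of_disjoint _ hfB fun A hA =>
    ⟨by rw [(hG A hA).1, card_transversal hT], hGint A hA B hB⟩).trans ?_
  gcongr
  have h₁ := card_le_card_inter_biUnion hT (hG B hB).2
  have h₂ := card_sdiff_add_card_inter B (univ.biUnion T)
  have h₃ := (hG B hB).1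
  omega

lemma intersectingPi_heavyTransversals : IntersectingPi (heavyTransversals T G m) := by
  intro f hf g hg
  refine exists_apply_eq_of_transversal_inter_nonempty hT (not_not.1 fun hfg => ?_)
  obtain ⟨B, hB⟩ : ({A ∈ G | A ∩ univ.biUnion T = transversal T g} : Finset _).Nonempty :=
    card_pos.1 (Nat.zero_lt_of_lt (mem_filter.1 hg).2)
  obtain ⟨hBG, hBU⟩ := mem_filter.1 hB
  have hfB : Disjoint (transversal T f) B := disjoint_left.2 fun a haf haB => hfg
    ⟨a, mem_inter.2 ⟨haf, hBU ▸ mem_inter.2 ⟨haB, transversal_subset_biUnion f haf⟩⟩⟩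
  exact (mem_filter.1 hf).2.not_ge (card_filter_inter_eq_transversal_le hT hG hGint hBG hfB)

/-- If there were `∏_{i ≠ z} |Tᵢ|` heavy transversals they would form the full star of a point
`c ∈ T j`; a member of `G` avoiding `c` avoids a transversal through `c`, which is heavy. -/
theorem card_heavyTransversals_lt (hm : 0 < m) {z : ι} (hz : 0 < #(T z))
    (hmin : ∀ i, #(T z) ≤ #(T i)) (hlarge : ∀ i ≠ z, m + 2 ≤ #(T i))
    (hstar : ∀ x, ∃ B ∈ G, x ∉ B) : #(heavyTransversals T G m) < ∏ i ∈ univ.erase z, #(T i) := by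
  by_contra! hcard
  obtain ⟨j, c, hc⟩ := (intersectingPi_heavyTransversals hT hG hGint).exists_forall_apply_eq
    (α := fun i => T i) (by simpa using hz) (by simpa using hmin)
    (fun i hi => by simpa using (hlarge i hi).trans' (by omega)) (by simpa using hcard)
  obtain ⟨B, hB, hcB⟩ := hstar c
  have hstar_card : #({f | f j = c} : Finset (∀ i, T i)) = ∏ i ∈ univ.erase j, #(T i) := by
    simpa using card_filter_apply_eq (α := fun i => T i) j c
  have hsub : heavyTransversals T G m ⊆ ({f | f j = c} : Finset (∀ i, T i)) := fun f hf =>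
    mem_filter.2 ⟨mem_univ _, hc f hf⟩
  have hP : 0 < ∏ i ∈ univ.erase z, #(T i) := prod_pos fun i _ => hz.trans_le (hmin i)
  have htj := eq_of_prod_erase_le_prod_erase hP (hmin j)
    (hcard.trans ((card_le_card hsub).trans hstar_card.le))
  have hlarge' : ∀ i ≠ j, m + 2 ≤ #(T i) := fun i hij => by
    rcases eq_or_ne i z with rfl | hiz
    · exact htj ▸ hlarge j hij.symm
    · exact hlarge i hiz
  obtain ⟨f, hfj, hfB⟩ := exists_apply_eq_disjoint_transversal c hcB
    fun i hij => sdiff_nonempty_of_card_eq hT (hG B hB).2 (hG B hB).1 (hlarge' i hij)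
  have hheavy : heavyTransversals T G m = ({f | f j = c} : Finset (∀ i, T i)) :=
    eq_of_subset_of_card_le hsub
      (hstar_card ▸ (prod_erase_le_prod_erase (t := fun i => #(T i)) hz (hmin j)).trans hcard)
  have hf : f ∈ heavyTransversals T G m := hheavy ▸ mem_filter.2 ⟨mem_univ _, hfj⟩
  exact (mem_filter.1 hf).2.not_ge (card_filter_inter_eq_transversal_le hT hG hGint hB hfB)

end Traces

theorem exists_card_le_card_filter_mem {α ι : Type*} [Fintype α] [DecidableEq α] [Fintype ι]
    [DecidableEq ι] {T : ι → Finset α} (hT : Pairwise (Disjoint on T)) {m : ℕ} {z : ι}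
    (hz : 0 < #(T z)) (hmin : ∀ i, #(T z) ≤ #(T i)) (hlarge : ∀ i ≠ z, m + 2 ≤ #(T i))
    (hN : 2 ^ #(univ.biUnion T) * m ^ 2 + m ≤ #(univ.biUnion T)ᶜ) {H : Finset (Finset α)}
    (hH : ∀ A, A ∈ H ↔ #A = Fintype.card ι + m ∧ ∀ i, (A ∩ T i).Nonempty)
    {G : Finset (Finset α)} (hGH : G ⊆ H) (hGint : ∀ A ∈ G, ∀ B ∈ G, (A ∩ B).Nonempty) :
    ∃ x, #G ≤ #{A ∈ H | x ∈ A} := by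
  have hG : ∀ A ∈ G, #A = Fintype.card ι + m ∧ ∀ i, (A ∩ T i).Nonempty :=
    fun A hA => (hH A).1 (hGH hA)
  by_cases hstar : ∃ x, ∀ A ∈ G, x ∈ A
  · obtain ⟨x, hx⟩ := hstar
    exact ⟨x, card_le_card fun A hA => mem_filter.2 ⟨hGH hA, hx A hA⟩⟩
  push Not at hstar
  obtain ⟨x, hx⟩ := card_pos.1 hz
  refine ⟨x, le_trans ?_ (card_mul_choose_le_card_filter_mem hT hH ⟨x, hx⟩)⟩
  rcases Nat.eq_zero_or_pos m with rfl | hm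
  · simpa using card_le_prod_erase_of_card_eq hT (by simpa using hG) hGint hz hmin
  set N := #(univ.biUnion T)ᶜ
  set P := ∏ i ∈ univ.erase z, #(T i)
  have hm2 : m ≤ 2 ^ #(univ.biUnion T) * m ^ 2 :=
    Nat.le_mul_of_pos_left _ (by positivity) |>.trans' (Nat.le_self_pow two_ne_zero m)
  calc #G ≤ #(heavyTransversals T G m) * N.choose m +
        2 ^ #(univ.biUnion T) * (m * N.choose (m - 1)) :=
        card_le_card_heavyTransversals_mul_add hT hG hm (by omega)
    _ ≤ (P - 1) * N.choose m + N.choose m := by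
        gcongr
        · have := card_heavyTransversals_lt hT hG hGint hm hz hmin hlarge hstar
          omega
        · exact Nat.mul_mul_choose_pred_le_choose hm (by omega)
    _ = P * N.choose m := by
        have : 0 < P := prod_pos fun i _ => hz.trans_le (hmin i)
        rw [← Nat.succ_mul, Nat.succ_eq_add_one, Nat.sub_add_cancel this]

/-- Theorem 5.2: given `2 ≤ d ≤ k` and `2 ≤ t₁ ≤ t₂ ≤ ⋯ ≤ t_d` with `t₂ ≥ k-d+2`, for all
sufficiently large `n` and any pairwise disjoint sets `T₁, …, T_d ⊆ [n]` with `|Tᵢ| = tᵢ`,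
the family `H` of `k`-subsets of `[n]` meeting every `Tᵢ` has the EKR property: every
intersecting subfamily of `H` has size at most the size of some star of `H`. -/
theorem ekr_property_transversal (d k : ℕ) (hd : 2 ≤ d) (hdk : d ≤ k)
    (t : Fin d → ℕ) (hmono : Monotone t)
    (ht1 : 2 ≤ t ⟨0, by omega⟩) (ht2 : k - d + 2 ≤ t ⟨1, by omega⟩) :
    ∃ n₀ : ℕ, ∀ n : ℕ, n₀ ≤ n →
      ∀ T : Fin d → Finset (Fin n),
        (∀ i j : Fin d, i ≠ j → Disjoint (T i) (T j)) →
        (∀ i : Fin d, (T i).card = t i) →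
        ∀ H : Finset (Finset (Fin n)),
          (∀ A : Finset (Fin n),
            A ∈ H ↔ (A.card = k ∧ ∀ i : Fin d, (A ∩ T i).Nonempty)) →
          ∀ G ⊆ H, (∀ A ∈ G, ∀ B ∈ G, (A ∩ B).Nonempty) →
            ∃ x : Fin n, G.card ≤ (H.filter (fun A => x ∈ A)).card := by
  refine ⟨∑ i, t i + 2 ^ (∑ i, t i) * (k - d) ^ 2 + (k - d),
    fun n hn T hT hTt H hH G hGH hGint => ?_⟩
  have hU : #(univ.biUnion T) = ∑ i, t i := by
    rw [card_biUnion fun i _ j _ hij => hT i j hij]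
    exact sum_congr rfl fun i _ => hTt i
  refine exists_card_le_card_filter_mem (z := ⟨0, by omega⟩) (m := k - d)
    (fun i j hij => hT i j hij) ?_ (fun i => ?_) (fun i hi => ?_) ?_ (fun A => ?_) hGH hGint
  · rw [hTt]; omega
  · rw [hTt, hTt]; exact hmono (Nat.zero_le (i : ℕ))
  · rw [hTt]
    exact ht2.trans (hmono (Nat.one_le_iff_ne_zero.2 fun h => hi (Fin.ext h)))
  · rw [card_compl, Fintype.card_fin, hU]; omega
  · rw [hH, Fintype.card_fin, Nat.add_sub_cancel' hdk]
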